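/- In the farmer model, the existentially quantified nested statement 'R = 1 is a cause of (∃w. W = w is a cause of C = 0)' is false. -/
import Mathlib


/-- A causal model: structural equations `F` for endogenous variables `V`,
given a context (setting of exogenous variables) `u : U`.  Acyclicity is
enforced by an ordering `ord`: each equation may only depend on
strictly smaller variables. -/
structure CausalModel (U V Val : Type) where
  F : V → U → (V → Val) → Val
  ord : V → ℕ
  resp : ∀ v u a b, (∀ w, ord w < ord v → a w = b w) → F v u a = F v u b

namespace CausalModel

variable {U V Val : Type}

/-- `s` is a compatible (consistent) assignment to the endogenous variables. -/
def Solves (M : CausalModel U V Val) (u : U) (s : V → Val) : Prop :=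
  ∀ v, s v = M.F v u s

/-- Intervention: replace the equations of variables on which `g` is defined
by the corresponding constants. -/
def intervene (M : CausalModel U V Val) (g : V → Option Val) : CausalModel U V Val where
  F v u a := (g v).getD (M.F v u a)
  ord := M.ord
  resp := by
    intro v u a b h
    cases hg : g v <;> simp [Option.getD, hg, M.resp v u a b h]

end CausalModel

/-- Formulas: atoms `X = x`, negation, conjunction, and causal statements
`X⃗ = x⃗ ⇝ φ` (per the modified HP definition). -/
inductive Form (V Val : Type) where
  | atom : V → Val → Form V Val
  | neg : Form V Val → Form V Val
  | conj : Form V Val → Form V Val → Form V Val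
  | cause : List (V × Val) → Form V Val → Form V Val

namespace Form

variable {U V Val : Type}

def disj (φ ψ : Form V Val) : Form V Val := .neg (.conj (.neg φ) (.neg ψ))

variable [DecidableEq V]

mutual
/-- Satisfaction `(M,u) ⊨ φ`.  Since the model is acyclic, there is a
unique compatible assignment, over which we (harmlessly) quantify. -/
def holds (M : CausalModel U V Val) (u : U) : Form V Val → Prop
  | .atom X x => ∀ s, M.Solves u s → s X = x
  | .neg φ => ¬ holds M u φ
  | .conj φ ψ => holds M u φ ∧ holds M u ψ
  | .cause XS φ =>
      -- AC1
      (holds M u φ ∧ ∀ s, M.Solves u s → ∀ p ∈ XS, s p.1 = p.2) ∧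
      -- AC2
      AC2 M u XS φ ∧
      -- AC3 (minimality)
      (∀ XS', List.Sublist XS' XS → XS' ≠ XS → ¬ AC2 M u XS' φ)
termination_by φ => (sizeOf φ, 0)

/-- AC2: there are alternative values `x'` for the variables of `XS` and a
witness set `W` held at its actual values making `φ` false. -/
def AC2 (M : CausalModel U V Val) (u : U) (XS : List (V × Val)) (φ : Form V Val) : Prop :=
  ∃ (x' : V → Val) (W : Finset V), ∀ s, M.Solves u s →
    ¬ holds (M.intervene (fun v =>
        if v ∈ XS.map Prod.fst then some (x' v)
        else if v ∈ W then some (s v) else none)) u φ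
termination_by (sizeOf φ, 1)
end

/-- Variables occurring in a formula. -/
def vars : Form V Val → Finset V
  | .atom X _ => {X}
  | .neg φ => vars φ
  | .conj φ ψ => vars φ ∪ vars ψ
  | .cause XS φ => (XS.map Prod.fst).toFinset ∪ vars φ

/-- Simple formulas: Boolean combinations of atoms. -/
def Simple : Form V Val → Prop
  | .atom _ _ => True
  | .neg φ => Simple φ
  | .conj φ ψ => Simple φ ∧ Simple ψ
  | .cause _ _ => False

end Form

/-- The farmer model: R = var 0 (relocation, actually 1), W = var 1 (weather:
0 drought, 1 fair, 2 flood; W = 2 if R = 0, else W = 0), C = var 2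
(crops, C = 1 iff W = 1). All values live in `Fin 3`. -/
def Mfarmer : CausalModel Unit (Fin 3) (Fin 3) where
  F v _ a :=
    match v with
    | 0 => 1
    | 1 => if a 0 = 0 then 2 else 0
    | 2 => if a 1 = 1 then 1 else 0
  ord v := v.val
  resp := by
    intro v u a b h
    fin_cases v
    · rfl
    · show (if a 0 = 0 then (2:Fin 3) else 0) = (if b 0 = 0 then 2 else 0)
      rw [h 0 (by norm_num)]
    · show (if a 1 = 1 then (1:Fin 3) else 0) = (if b 1 = 1 then 1 else 0)
      rw [h 1 (by norm_num)]


lemma farmer_sol : ∀ s, Mfarmer.Solves () s → s 0 = 1 ∧ s 1 = 0 ∧ s 2 = 0 := by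
  intro s hs
  have h0 : s 0 = 1 := hs 0
  have h1 : s 1 = 0 := by
    have := hs 1
    simp only [Mfarmer, h0] at this
    simpa using this
  have h2 : s 2 = 0 := by
    have := hs 2
    simp only [Mfarmer, h1] at this
    simpa using this
  exact ⟨h0, h1, h2⟩

/-- If the equation for variable 2 is constantly 0, then `atom 2 0` holds. -/
lemma atom2_holds (N : CausalModel Unit (Fin 3) (Fin 3))
    (h : ∀ u a, N.F 2 u a = 0) : Form.holds N () (.atom 2 0) := by
  rw [Form.holds]
  intro t ht
  rw [ht 2, h]

lemma sol_interv (g : Fin 3 → Option (Fin 3)) (h0 : g 0 = none) (h1 : g 1 = none)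
    (h2 : g 2 = some 0) : (Mfarmer.intervene g).Solves () ![1, 0, 0] := by
  intro v
  fin_cases v
  · simp [CausalModel.intervene, h0, Mfarmer]
  · simp [CausalModel.intervene, h1, Mfarmer]
  · simp [CausalModel.intervene, h2]

lemma not_cause_w (g : Fin 3 → Option (Fin 3)) (h0 : g 0 = none) (h1 : g 1 = none)
    (h2 : g 2 = some 0) (w : Fin 3) :
    ¬ Form.holds (Mfarmer.intervene g) () (.cause [(1, w)] (.atom 2 0)) := by
  intro h
  rw [Form.holds] at h
  obtain ⟨⟨_, hAC1⟩, hAC2, _⟩ := h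
  have hsol := sol_interv g h0 h1 h2
  have hw : w = 0 := by
    have := hAC1 _ hsol (1, w) (by simp)
    simpa using this.symm
  subst hw
  rw [Form.AC2] at hAC2
  obtain ⟨x', W, hW⟩ := hAC2
  apply hW _ hsol
  apply atom2_holds
  intro u a
  simp only [CausalModel.intervene]
  by_cases hm : (2:Fin 3) ∈ W <;> simp [hm, h2]

/-- In the farmer model, the existentially quantified nested
statement `R = 1 ⇝ (∃w. W = w ⇝ C = 0)` (the existential being the finite
disjunction over the range of W) is false. -/
theorem stmt12 :
    ¬ Form.holds Mfarmer () (.cause [(0, 1)]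
      (Form.disj (.cause [(1, 0)] (.atom 2 0))
        (Form.disj (.cause [(1, 1)] (.atom 2 0))
                   (.cause [(1, 2)] (.atom 2 0))))) := by
  intro h
  rw [Form.holds] at h
  obtain ⟨-, -, hAC3⟩ := h
  apply hAC3 [] (List.nil_sublist _) (by simp)
  rw [Form.AC2]
  refine ⟨fun _ => 0, {2}, ?_⟩
  intro s hs
  obtain ⟨-, -, h2⟩ := farmer_sol s hs
  set g : Fin 3 → Option (Fin 3) := fun v =>
    if v ∈ List.map Prod.fst ([] : List (Fin 3 × Fin 3)) then some 0
    else if v ∈ ({2} : Finset (Fin 3)) then some (s v) else none with hg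
  have hg0 : g 0 = none := by simp [hg]
  have hg1 : g 1 = none := by simp [hg]
  have hg2 : g 2 = some 0 := by simp [hg, h2]
  unfold Form.disj
  rw [Form.holds, Form.holds, Form.holds, Form.holds, Form.holds, Form.holds]
  push_neg
  refine ⟨not_cause_w g hg0 hg1 hg2 0, ?_, ?_⟩
  · rw [Form.holds]; exact not_cause_w g hg0 hg1 hg2 1
  · rw [Form.holds]; exact not_cause_w g hg0 hg1 hg2 2
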